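/- For integers r ≥ 2 and m ≥ 1, the number of permutations of {1,...,rm} all of whose cycle lengths are divisible by r equals (rm)! · (1+r)(1+2r)⋯(1+(m-1)r) / (r^m · m!). -/

import Mathlib

/-!
Root the permutations of `Option (Fin n)` at `none` and let `R(j, n)` (`rootedCycCount r j n`)
count those whose cycles avoiding the root have length divisible by `r` and whose root cycle has
length `≡ j [MOD r]`. Removing the root from its cycle (`decomposeOption`) leaves a permutation of
`Fin n`: if the root was fixed, an `r`-cycle permutation; otherwise one whose cycle through the
former image `q` of the root is one shorter than the root cycle. With `c(n)` (`cycCount r n`) the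
number of `r`-cycle permutations of `Fin n`, this gives
`R(j, n + 1) = [j = 1] c(n + 1) + (n + 1) R(j - 1, n)`. Hence `R(j, n) = 0` unless `j = n + 1`,
so `c(n + 1) = [r ∣ n + 1] R(n + 1, n)` and
`R(n + 2, n + 1) = (n + 1 + [r ∣ n + 1]) R(n + 1, n)`. Across a block of `r` consecutive sizes
this yields `c(r(m + 1)) · r(m + 1) · (rm)! = (rm + 1) · (r(m + 1))! · c(rm)`, and the product
formula follows by induction on `m`.
-/

open Equiv Equiv.Perm Function

section Transfer

variable {α β : Type*}

theorem Function.minimalPeriod_eq_of_iterate_apply {f : α → α} {g : β → β} {φ : α → β}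
    (hφ : Injective φ) {x : α} (h : ∀ n, g^[n] (φ x) = φ (f^[n] x)) :
    minimalPeriod g (φ x) = minimalPeriod f x :=
  minimalPeriod_eq_minimalPeriod_iff.2 fun n => by
    simp only [IsPeriodicPt, IsFixedPt, h, hφ.eq_iff]

theorem Equiv.minimalPeriod_permCongr_apply (f : α ≃ β) (σ : Perm α) (x : α) :
    minimalPeriod (f.permCongr σ) (f x) = minimalPeriod σ x :=
  minimalPeriod_eq_of_iterate_apply f.injective fun n =>
    ((Semiconj.iterate_right (fun y => by simp) n) x).symm

theorem Equiv.sameCycle_permCongr_apply (f : α ≃ β) {σ : Perm α} {x y : α} :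
    (f.permCongr σ).SameCycle (f x) (f y) ↔ σ.SameCycle x y := by
  have hpow (n : ℤ) : f.permCongr σ ^ n = f.permCongr (σ ^ n) :=
    (map_zpow f.permCongrHom σ n).symm
  simp [SameCycle, hpow, permCongr_apply]

theorem Equiv.Perm.SameCycle.minimalPeriod_eq [Finite α] {σ : Perm α} {x y : α}
    (h : σ.SameCycle x y) : minimalPeriod σ y = minimalPeriod σ x := by
  obtain ⟨k, rfl⟩ := h.exists_nat_pow_eq
  rw [← iterate_eq_pow]
  exact minimalPeriod_apply_iterate (σ.injective.mem_periodicPts x) k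

end Transfer

section InsertNone

variable {α : Type*} [DecidableEq α] (e : Perm α)

theorem Equiv.Perm.decomposeOption_symm_none_apply_none :
    decomposeOption.symm (none, e) none = none := by
  simp

theorem Equiv.Perm.minimalPeriod_decomposeOption_symm_none_some (x : α) :
    minimalPeriod (decomposeOption.symm (none, e)) (some x) = minimalPeriod e x :=
  minimalPeriod_eq_of_iterate_apply (Option.some_injective α) fun n =>
    (Semiconj.iterate_right (f := some) (fun y => by simp) n x).symm

theorem Equiv.Perm.not_sameCycle_decomposeOption_symm_none (x : α) :
    ¬ (decomposeOption.symm (none, e)).SameCycle none (some x) := fun h =>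
  Option.some_ne_none x (h.eq_of_left (decomposeOption_symm_none_apply_none e)).symm

variable (q : α)

theorem Equiv.Perm.decomposeOption_symm_some_apply_none :
    decomposeOption.symm (some q, e) none = some q := by
  simp

theorem Equiv.Perm.decomposeOption_symm_some_apply_some (x : α) :
    decomposeOption.symm (some q, e) (some x) = if e x = q then none else some (e x) := by
  split_ifs with h
  · simp [h]
  · simp [swap_apply_of_ne_of_ne, h]

variable {e q}

theorem Equiv.Perm.iterate_decomposeOption_symm_some_apply_some {y : α}
    (hy : ¬ e.SameCycle q y) (n : ℕ) :
    (decomposeOption.symm (some q, e))^[n] (some y) = some (e^[n] y) := by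
  induction n with
  | zero => rfl
  | succ n ih =>
    have hne : e^[n + 1] y ≠ q := fun h =>
      hy (SameCycle.symm ⟨((n + 1 : ℕ) : ℤ), by rw [zpow_natCast, ← iterate_eq_pow, h]⟩)
    rw [iterate_succ_apply', ih, decomposeOption_symm_some_apply_some, ← iterate_succ_apply' e,
      if_neg hne]

theorem Equiv.Perm.iterate_succ_decomposeOption_symm_some_apply_none {k : ℕ}
    (hk : k < minimalPeriod e q) :
    (decomposeOption.symm (some q, e))^[k + 1] none = some (e^[k] q) := by
  induction k with
  | zero => simp
  | succ k ih =>
    have hne : e^[k + 1] q ≠ q :=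
      not_isPeriodicPt_of_pos_of_lt_minimalPeriod (Nat.succ_ne_zero k) hk
    rw [iterate_succ_apply', ih (by omega), decomposeOption_symm_some_apply_some,
      ← iterate_succ_apply' e, if_neg hne]

theorem Equiv.Perm.minimalPeriod_decomposeOption_symm_some_some {y : α} (hy : ¬ e.SameCycle q y) :
    minimalPeriod (decomposeOption.symm (some q, e)) (some y) = minimalPeriod e y :=
  minimalPeriod_eq_of_iterate_apply (Option.some_injective α)
    (iterate_decomposeOption_symm_some_apply_some hy)

variable [Finite α]

theorem Equiv.Perm.minimalPeriod_decomposeOption_symm_some_none :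
    minimalPeriod (decomposeOption.symm (some q, e)) none = minimalPeriod e q + 1 := by
  set σ := decomposeOption.symm (some q, e)
  obtain ⟨L, hL⟩ : ∃ L, minimalPeriod e q = L + 1 := Nat.exists_eq_add_one.2
    (minimalPeriod_pos_of_mem_periodicPts (e.injective.mem_periodicPts q))
  have hreturn : IsPeriodicPt σ (L + 2) none := by
    have hq : e (e^[L] q) = q := by
      rw [← iterate_succ_apply' e, Nat.succ_eq_add_one, ← hL]
      exact isPeriodicPt_minimalPeriod e q
    rw [IsPeriodicPt, IsFixedPt, iterate_succ_apply',
      iterate_succ_decomposeOption_symm_some_apply_none (by omega),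
      decomposeOption_symm_some_apply_some, if_pos hq]
  refine hL ▸ le_antisymm (hreturn.minimalPeriod_le (by omega)) (not_lt.1 fun hlt => ?_)
  obtain ⟨k, hk⟩ := Nat.exists_eq_add_one.2
    (minimalPeriod_pos_of_mem_periodicPts (σ.injective.mem_periodicPts none))
  have hper := isPeriodicPt_minimalPeriod σ none
  rw [IsPeriodicPt, IsFixedPt, hk, iterate_succ_decomposeOption_symm_some_apply_none (by omega)]
    at hper
  exact Option.some_ne_none _ hper

theorem Equiv.Perm.sameCycle_decomposeOption_symm_some_none_some {y : α} :
    (decomposeOption.symm (some q, e)).SameCycle none (some y) ↔ e.SameCycle q y := by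
  set σ := decomposeOption.symm (some q, e)
  refine ⟨fun h => not_not.1 fun hy => ?_, fun h => ?_⟩
  · obtain ⟨k, hk⟩ := h.symm.exists_nat_pow_eq
    rw [← iterate_eq_pow, iterate_decomposeOption_symm_some_apply_some hy] at hk
    exact Option.some_ne_none _ hk
  · have hstep (x : α) (hx : σ.SameCycle none (some x)) : σ.SameCycle none (some (e x)) := by
      have hσx := decomposeOption_symm_some_apply_some e q x
      split_ifs at hσx with hex
      · exact hex ▸ ⟨1, by simp [σ]⟩
      · exact hσx ▸ hx.trans (SameCycle.refl σ _).apply_right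
    obtain ⟨k, rfl⟩ := h.exists_nat_pow_eq
    clear h
    induction k with
    | zero => exact ⟨1, by simp [σ]⟩
    | succ k ih => rw [pow_succ', Perm.mul_apply]; exact hstep _ ih

end InsertNone

section RCycleAwayFrom

variable {α β : Type*} {r : ℕ}

variable (r) in
def IsRCycleAwayFrom (j : ZMod r) (a : α) (σ : Perm α) : Prop :=
  (minimalPeriod σ a : ZMod r) = j ∧ ∀ x, ¬ σ.SameCycle a x → r ∣ minimalPeriod σ x

theorem isRCycleAwayFrom_zero_iff [Finite α] {a : α} {σ : Perm α} :
    IsRCycleAwayFrom r 0 a σ ↔ ∀ x, r ∣ minimalPeriod σ x := by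
  refine ⟨fun ⟨ha, hx⟩ x => ?_, fun h =>
    ⟨(ZMod.natCast_eq_zero_iff _ _).2 (h a), fun x _ => h x⟩⟩
  by_cases hax : σ.SameCycle a x
  · rw [hax.minimalPeriod_eq]
    exact (ZMod.natCast_eq_zero_iff _ _).1 ha
  · exact hx x hax

theorem isRCycleAwayFrom_permCongr_iff (f : α ≃ β) {j : ZMod r} {a : α} {σ : Perm α} :
    IsRCycleAwayFrom r j (f a) (f.permCongr σ) ↔ IsRCycleAwayFrom r j a σ := by
  rw [IsRCycleAwayFrom, IsRCycleAwayFrom, ← f.forall_congr_right]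
  simp only [f.minimalPeriod_permCongr_apply, f.sameCycle_permCongr_apply]

variable [DecidableEq α] {j : ZMod r} (e : Perm α)

theorem isRCycleAwayFrom_decomposeOption_symm_none_iff :
    IsRCycleAwayFrom r j none (decomposeOption.symm (none, e)) ↔
      j = 1 ∧ ∀ x, r ∣ minimalPeriod e x := by
  simp only [IsRCycleAwayFrom, Option.forall, SameCycle.refl, not_true_eq_false, false_imp_iff,
    not_sameCycle_decomposeOption_symm_none, not_false_eq_true, true_implies, true_and,
    minimalPeriod_decomposeOption_symm_none_some, Nat.cast_one, eq_comm (a := (1 : ZMod r)),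
    minimalPeriod_eq_one_iff_isFixedPt.2 (decomposeOption_symm_none_apply_none e)]

theorem isRCycleAwayFrom_decomposeOption_symm_some_iff [Finite α] (q : α) :
    IsRCycleAwayFrom r j none (decomposeOption.symm (some q, e)) ↔
      IsRCycleAwayFrom r (j - 1) q e := by
  simp only [IsRCycleAwayFrom, Option.forall, SameCycle.refl, not_true_eq_false, false_imp_iff,
    sameCycle_decomposeOption_symm_some_none_some, minimalPeriod_decomposeOption_symm_some_none,
    true_and, Nat.cast_add, Nat.cast_one, eq_sub_iff_add_eq]
  refine and_congr_right fun _ => forall_congr' fun y => imp_congr_right fun hy => ?_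
  rw [minimalPeriod_decomposeOption_symm_some_some hy]

end RCycleAwayFrom

section Count

variable (r : ℕ)

noncomputable def cycCount (n : ℕ) : ℕ :=
  Nat.card {σ : Perm (Fin n) // ∀ x, r ∣ minimalPeriod σ x}

noncomputable def rootedCycCount (j : ZMod r) (n : ℕ) : ℕ :=
  Nat.card {σ : Perm (Option (Fin n)) // IsRCycleAwayFrom r j none σ}

variable {r} {n : ℕ}

theorem cycCount_zero : cycCount r 0 = 1 :=
  Nat.card_eq_one_iff_unique.2 ⟨inferInstance, ⟨⟨1, fun x => x.elim0⟩⟩⟩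

theorem cycCount_succ : cycCount r (n + 1) = rootedCycCount r 0 n :=
  Nat.card_congr <| (finSuccEquiv n).permCongr.subtypeEquiv fun σ => by
    rw [← isRCycleAwayFrom_zero_iff (a := 0), ← isRCycleAwayFrom_permCongr_iff (finSuccEquiv n),
      finSuccEquiv_zero]

theorem card_isRCycleAwayFrom_eq_rootedCycCount (j : ZMod r) (q : Fin (n + 1)) :
    Nat.card {σ : Perm (Fin (n + 1)) // IsRCycleAwayFrom r j q σ} = rootedCycCount r j n :=
  Nat.card_congr <| (finSuccEquiv' q).permCongr.subtypeEquiv fun σ => by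
    rw [← isRCycleAwayFrom_permCongr_iff (finSuccEquiv' q), finSuccEquiv'_at]

theorem rootedCycCount_eq (j : ZMod r) (n : ℕ) :
    rootedCycCount r j n = (if j = 1 then cycCount r n else 0) +
      ∑ q : Fin n, Nat.card {σ : Perm (Fin n) // IsRCycleAwayFrom r (j - 1) q σ} := by
  let P (p : Option (Fin n)) (σ : Perm (Fin n)) :=
    IsRCycleAwayFrom r j none (decomposeOption.symm (p, σ))
  have hdecomp : {σ // IsRCycleAwayFrom r j none σ} ≃ Σ p, {σ // P p σ} :=
    (decomposeOption.subtypeEquiv fun σ => by simp [P]).trans (subtypeProdEquivSigmaSubtype P)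
  rw [rootedCycCount, Nat.card_congr hdecomp, Nat.card_sigma, Fintype.sum_option]
  congr 1
  · simp only [P, isRCycleAwayFrom_decomposeOption_symm_none_iff]
    split_ifs with hj
    · simp only [hj, true_and]; rfl
    · simp [hj]
  · simp only [P, isRCycleAwayFrom_decomposeOption_symm_some_iff]

theorem rootedCycCount_zero (j : ZMod r) : rootedCycCount r j 0 = if j = 1 then 1 else 0 := by
  simp [rootedCycCount_eq, cycCount_zero]

theorem rootedCycCount_succ (j : ZMod r) :
    rootedCycCount r j (n + 1) =
      (if j = 1 then rootedCycCount r 0 n else 0) + (n + 1) * rootedCycCount r (j - 1) n := by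
  simp [rootedCycCount_eq, cycCount_succ, card_isRCycleAwayFrom_eq_rootedCycCount]

end Count

section Closed

open scoped Nat

variable {r n : ℕ}

theorem rootedCycCount_eq_zero {j : ZMod r} (hj : j ≠ n + 1) : rootedCycCount r j n = 0 := by
  induction n generalizing j with
  | zero => simpa [rootedCycCount_zero] using hj
  | succ n ih =>
    push_cast at hj
    rw [rootedCycCount_succ, ih (j := j - 1) fun h => hj (by rw [← h]; ring), mul_zero,
      add_zero]
    split_ifs with hj1
    · exact ih fun h => hj (by rw [hj1, ← h]; ring)
    · rfl

theorem cycCount_succ_of_dvd (h : r ∣ n + 1) :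
    cycCount r (n + 1) = rootedCycCount r (n + 1) n := by
  rw [cycCount_succ, ← Nat.cast_succ, (ZMod.natCast_eq_zero_iff _ _).2 h]

theorem cycCount_succ_of_not_dvd (h : ¬ r ∣ n + 1) : cycCount r (n + 1) = 0 := by
  rw [cycCount_succ, rootedCycCount_eq_zero]
  rwa [ne_eq, ← Nat.cast_succ, eq_comm, ZMod.natCast_eq_zero_iff]

theorem rootedCycCount_succ_self :
    rootedCycCount r (n + 1 + 1) (n + 1) =
      (n + 1) * rootedCycCount r (n + 1) n + cycCount r (n + 1) := by
  rw [rootedCycCount_succ, add_comm, add_sub_cancel_right]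
  congr 1
  by_cases h : r ∣ n + 1
  · rw [if_pos, cycCount_succ]
    rw [← Nat.cast_succ, (ZMod.natCast_eq_zero_iff _ _).2 h, zero_add]
  · rw [if_neg, cycCount_succ_of_not_dvd h]
    rwa [add_eq_right, ← Nat.cast_succ, ZMod.natCast_eq_zero_iff]

theorem rootedCycCount_self_of_dvd (h : r ∣ n) :
    rootedCycCount r (n + 1) n = (n + 1) * cycCount r n := by
  cases n with
  | zero => simp [rootedCycCount_zero, cycCount_zero]
  | succ n => push_cast; rw [rootedCycCount_succ_self, cycCount_succ_of_dvd h]; ring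

theorem rootedCycCount_self_add_mul_factorial {i : ℕ}
    (h : ∀ t, 0 < t → t ≤ i → ¬ r ∣ n + t) :
    rootedCycCount r (↑(n + i) + 1) (n + i) * n ! = (n + i)! * rootedCycCount r (n + 1) n := by
  induction i with
  | zero => simp [mul_comm]
  | succ i ih =>
    rw [← add_assoc, Nat.cast_succ, rootedCycCount_succ_self,
      cycCount_succ_of_not_dvd (n := n + i) (h (i + 1) (by omega) le_rfl), add_zero,
      Nat.factorial_succ, mul_assoc, ih fun t ht hti => h t ht (by omega)]
    ring

theorem cycCount_mul_succ_mul (hr : 0 < r) (m : ℕ) :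
    cycCount r (r * (m + 1)) * (r * (m + 1) * (r * m)!) =
      (r * m + 1) * (r * (m + 1))! * cycCount r (r * m) := by
  obtain ⟨s, rfl⟩ := Nat.exists_eq_add_one.2 hr
  have hlast : (s + 1) * (m + 1) = (s + 1) * m + s + 1 := by ring
  have hgap (t : ℕ) (ht : 0 < t) (hts : t ≤ s) : ¬ s + 1 ∣ (s + 1) * m + t := fun hdvd =>
    absurd (Nat.le_of_dvd ht ((Nat.dvd_add_right (dvd_mul_right _ _)).1 hdvd)) (by omega)
  have hblock := rootedCycCount_self_add_mul_factorial hgap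
  rw [rootedCycCount_self_of_dvd (dvd_mul_right _ _)] at hblock
  rw [hlast, cycCount_succ_of_dvd (hlast ▸ dvd_mul_right _ _), Nat.factorial_succ]
  linear_combination ((s + 1) * m + s + 1) * hblock

theorem cycCount_mul_mul_pow_mul_factorial (hr : 0 < r) (m : ℕ) :
    cycCount r (r * m) * (r ^ m * m !) = (r * m)! * ∏ k ∈ Finset.range m, (1 + k * r) := by
  induction m with
  | zero => simp [cycCount_zero]
  | succ m ih =>
    refine Nat.eq_of_mul_eq_mul_right (Nat.factorial_pos (r * m)) ?_
    calc cycCount r (r * (m + 1)) * (r ^ (m + 1) * (m + 1)!) * (r * m)!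
        = cycCount r (r * (m + 1)) * (r * (m + 1) * (r * m)!) * (r ^ m * m !) := by
          rw [pow_succ, Nat.factorial_succ]; ring
      _ = (r * m + 1) * (r * (m + 1))! * (cycCount r (r * m) * (r ^ m * m !)) := by
          rw [cycCount_mul_succ_mul hr]; ring
      _ = ((r * (m + 1))! * ∏ k ∈ Finset.range (m + 1), (1 + k * r)) * (r * m)! := by
          rw [ih, Finset.prod_range_succ]; ring

end Closed

theorem stmt1_general (r m : ℕ) (hr : 2 ≤ r) :
    Nat.card {σ : Equiv.Perm (Fin (r * m)) //
        ∀ x, r ∣ Function.minimalPeriod ⇑σ x} * (r ^ m * Nat.factorial m) =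
      Nat.factorial (r * m) * ∏ k ∈ Finset.range m, (1 + k * r) :=
  cycCount_mul_mul_pow_mul_factorial (by omega) m

/-- |Cyc_r(rm)| · r^m · m! = (rm)! · (1+r)(1+2r)⋯(1+(m-1)r). -/
theorem stmt1 (r m : ℕ) (hr : 2 ≤ r) (hm : 1 ≤ m) :
    Nat.card {σ : Equiv.Perm (Fin (r * m)) //
        ∀ x, r ∣ Function.minimalPeriod ⇑σ x} * (r ^ m * Nat.factorial m) =
      Nat.factorial (r * m) * ∏ k ∈ Finset.range m, (1 + k * r) :=
  stmt1_general r m hr
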